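/- Let T, M > 0, n ∈ ℕ with 2T ≤ n, and set δ := (2T)^n / n!. Let f : ℝ² → ℝ be smooth. Suppose that max{ ‖∂₂ f‖_{L^∞([0,n]²)}, ‖∂₁ⁿ f‖_{L^∞([0,n]²)} } ≤ M/2 and that for every integer r with 0 ≤ r ≤ ⌊T/δ⌋, one has ‖f(·, rδ)‖_{L^∞[T,2T]} > Mδ. Then for every t ∈ [0, T], the number of points x ∈ [0, T] with f(x, t) = 0 is strictly less than n. -/

import Mathlib

open Set Polynomial
open scoped ContDiff

private lemma rolle_finset (h : ℝ → ℝ) (hh : Differentiable ℝ h) :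
    ∀ (k : ℕ) (s : Finset ℝ) (hne : s.Nonempty), s.card = k + 1 →
      (∀ x ∈ s, h x = 0) →
      ∃ t : Finset ℝ, t.card = k ∧
        ∀ y ∈ t, deriv h y = 0 ∧ s.min' hne < y ∧ y < s.max' hne := by
  intro k
  induction k with
  | zero => intro s hne _ _; exact ⟨∅, rfl, by simp⟩
  | succ k ih =>
    intro s hne hcard hz
    have hm : s.min' hne ∈ s := s.min'_mem hne
    have hcard' : (s.erase (s.min' hne)).card = k + 1 := by
      rw [Finset.card_erase_of_mem hm, hcard]
      omega
    have hne' : (s.erase (s.min' hne)).Nonempty := Finset.card_pos.mp (by omega)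
    obtain ⟨t', ht'c, ht'⟩ := ih _ hne' hcard'
      (fun x hx => hz x (Finset.mem_of_mem_erase hx))
    have hm'm : (s.erase (s.min' hne)).min' hne' ∈ s.erase (s.min' hne) :=
      Finset.min'_mem _ hne'
    have hlt : s.min' hne < (s.erase (s.min' hne)).min' hne' :=
      lt_of_le_of_ne (s.min'_le _ (Finset.mem_of_mem_erase hm'm))
        (fun he => (Finset.ne_of_mem_erase hm'm) he.symm)
    obtain ⟨c, hcmem, hcd⟩ := exists_deriv_eq_zero hlt hh.continuous.continuousOn
      (by rw [hz _ hm, hz _ (Finset.mem_of_mem_erase hm'm)])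
    have hcnot : c ∉ t' := fun hc => absurd ((ht' c hc).2.1) (not_lt.mpr hcmem.2.le)
    refine ⟨insert c t', by rw [Finset.card_insert_of_notMem hcnot, ht'c], ?_⟩
    have hmax : (s.erase (s.min' hne)).max' hne' ≤ s.max' hne :=
      Finset.max'_subset hne' (Finset.erase_subset _ _)
    have hminmax : (s.erase (s.min' hne)).min' hne' ≤ (s.erase (s.min' hne)).max' hne' :=
      Finset.min'_le _ _ (Finset.max'_mem _ hne')
    intro y hy
    rcases Finset.mem_insert.mp hy with rfl | hyt
    · exact ⟨hcd, hcmem.1, lt_of_lt_of_le hcmem.2 (le_trans hminmax hmax)⟩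
    · exact ⟨(ht' y hyt).1, lt_trans hlt (ht' y hyt).2.1,
        lt_of_lt_of_le (ht' y hyt).2.2 hmax⟩

private lemma rolle_iter :
    ∀ (k : ℕ) (h : ℝ → ℝ), ContDiff ℝ ∞ h → ∀ (s : Finset ℝ) (a b : ℝ),
      (∀ x ∈ s, x ∈ Icc a b) → s.card = k + 1 → (∀ x ∈ s, h x = 0) →
      ∃ ξ ∈ Icc a b, iteratedDeriv k h ξ = 0 := by
  intro k
  induction k with
  | zero =>
    intro h _ s a b hsub hcard hz
    obtain ⟨x, hx⟩ := Finset.card_pos.mp (by omega : 0 < s.card)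
    exact ⟨x, hsub x hx, by simpa using hz x hx⟩
  | succ k ih =>
    intro h hh s a b hsub hcard hz
    have hne : s.Nonempty := Finset.card_pos.mp (by omega)
    obtain ⟨t, htc, ht⟩ := rolle_finset h (hh.differentiable (by simp)) (k + 1) s hne hcard hz
    have htsub : ∀ y ∈ t, y ∈ Icc a b := by
      intro y hy
      obtain ⟨_, h1, h2⟩ := ht y hy
      exact ⟨le_trans (hsub _ (s.min'_mem hne)).1 h1.le,
        le_trans h2.le (hsub _ (s.max'_mem hne)).2⟩
    obtain ⟨ξ, hξ, hval⟩ := ih (deriv h) (contDiff_infty_iff_deriv.mp hh).2 t a b htsub htc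
      (fun y hy => (ht y hy).1)
    exact ⟨ξ, hξ, by rw [iteratedDeriv_succ']; exact hval⟩

private lemma iteratedDeriv_polyeval (k : ℕ) :
    ∀ (p : Polynomial ℝ),
      iteratedDeriv k (fun y => p.eval y) = fun y => (derivative^[k] p).eval y := by
  induction k with
  | zero =>
    intro p
    funext y
    rw [iteratedDeriv_zero, Function.iterate_zero_apply]
  | succ k ih =>
    intro p
    have hder : deriv (fun y => p.eval y) = fun y => (derivative p).eval y :=
      funext fun y => Polynomial.deriv p
    rw [iteratedDeriv_succ', hder, ih (derivative p), Function.iterate_succ_apply]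

private lemma iteratedDeriv_sub' :
    ∀ (k : ℕ) (f g : ℝ → ℝ), ContDiff ℝ ∞ f → ContDiff ℝ ∞ g → ∀ x,
      iteratedDeriv k (fun y => f y - g y) x = iteratedDeriv k f x - iteratedDeriv k g x := by
  intro k
  induction k with
  | zero => intro f g _ _ x; simp
  | succ k ih =>
    intro f g hf hg x
    rw [iteratedDeriv_succ', iteratedDeriv_succ', iteratedDeriv_succ']
    have hd : deriv (fun y => f y - g y) = fun y => deriv f y - deriv g y := by
      funext y
      exact deriv_fun_sub (hf.differentiable (by simp) y) (hg.differentiable (by simp) y)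
    rw [hd]
    exact ih _ _ (contDiff_infty_iff_deriv.mp hf).2 (contDiff_infty_iff_deriv.mp hg).2 x

private lemma contDiff_prod_sub (s : Finset ℝ) :
    ContDiff ℝ ∞ (fun y : ℝ => ∏ z ∈ s, (y - z)) := by
  classical
  induction s using Finset.induction_on with
  | empty => simpa using contDiff_const
  | insert _ _ hns ih =>
    simp only [Finset.prod_insert hns]
    exact (contDiff_id.sub contDiff_const).mul ih

private lemma interp_bound (n : ℕ) (T C : ℝ) (hT : 0 < T) (g : ℝ → ℝ)
    (hg : ContDiff ℝ ∞ g) (s : Finset ℝ) (hcard : s.card = n)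
    (hsub : ∀ z ∈ s, z ∈ Icc 0 T) (hz : ∀ z ∈ s, g z = 0)
    (hC : ∀ ξ ∈ Icc (0:ℝ) (2 * T), |iteratedDeriv n g ξ| ≤ C)
    (x : ℝ) (hx : x ∈ Icc T (2 * T)) :
    |g x| ≤ C * (2 * T) ^ n / n.factorial := by
  have hC0 : 0 ≤ C := le_trans (abs_nonneg _) (hC 0 ⟨le_refl 0, by linarith⟩)
  have hfac : (0:ℝ) < n.factorial := by exact_mod_cast n.factorial_pos
  by_cases hgx : g x = 0
  · rw [hgx, abs_zero]; positivity
  have hxs : x ∉ s := fun hmem => hgx (hz x hmem)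
  set q : Polynomial ℝ := ∏ z ∈ s, (X - Polynomial.C z) with hq
  have hqmonic : q.Monic := monic_prod_of_monic _ _ (fun z _ => monic_X_sub_C z)
  have hqdeg : q.natDegree = n := by
    rw [hq, natDegree_prod _ _ (fun z _ => X_sub_C_ne_zero z)]
    simp [hcard]
  have hqeval : ∀ y, q.eval y = ∏ z ∈ s, (y - z) := by
    intro y; simp [hq, eval_prod]
  have hqx : q.eval x ≠ 0 := by
    rw [hqeval]
    exact Finset.prod_ne_zero_iff.mpr
      (fun z hzs => sub_ne_zero.mpr (fun he => hxs (he ▸ hzs)))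
  set c : ℝ := g x / q.eval x with hc
  set P : ℝ → ℝ := fun y => c * q.eval y with hP
  have hgxc : g x = c * q.eval x := by
    rw [hc, div_mul_cancel₀ _ hqx]
  have hPcont : ContDiff ℝ ∞ P := by
    have heq : P = fun y => c * ∏ z ∈ s, (y - z) := by
      funext y
      show c * q.eval y = _
      rw [hqeval]
    rw [heq]
    exact contDiff_const.mul (contDiff_prod_sub s)
  have hzero : ∀ y ∈ insert x s, g y - P y = 0 := by
    intro y hy
    rcases Finset.mem_insert.mp hy with rfl | hys
    · show g y - c * q.eval y = 0
      rw [← hgxc]; ring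
    · have hq0 : q.eval y = 0 := by
        rw [hqeval]
        exact Finset.prod_eq_zero hys (by ring)
      show g y - c * q.eval y = 0
      rw [hz y hys, hq0]; ring
  have hins : (insert x s).card = n + 1 := by
    rw [Finset.card_insert_of_notMem hxs, hcard]
  have hinssub : ∀ y ∈ insert x s, y ∈ Icc (0:ℝ) (2 * T) := by
    intro y hy
    rcases Finset.mem_insert.mp hy with rfl | hys
    · exact ⟨le_trans hT.le hx.1, hx.2⟩
    · obtain ⟨h1, h2⟩ := hsub y hys
      exact ⟨h1, by linarith⟩
  obtain ⟨ξ, hξ, hξ0⟩ := rolle_iter n (fun y => g y - P y) (hg.sub hPcont)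
    (insert x s) 0 (2 * T) hinssub hins hzero
  have hsplit := iteratedDeriv_sub' n g P hg hPcont ξ
  have hPo : P = fun y => (Polynomial.C c * q).eval y := by
    funext y; simp [hP]
  have hdq : derivative^[n] q = Polynomial.C ((n.factorial : ℝ)) := by
    have hdeg : (derivative^[n] q).natDegree ≤ 0 := by
      have h1 := natDegree_iterate_derivative q n
      omega
    rw [eq_C_of_natDegree_le_zero hdeg]
    congr 1
    rw [coeff_iterate_derivative]
    simp only [zero_add, Nat.descFactorial_self]
    rw [← hqdeg, hqmonic.coeff_natDegree]
    simp
  have hPn : iteratedDeriv n P ξ = c * n.factorial := by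
    rw [hPo, iteratedDeriv_polyeval, iterate_derivative_C_mul, hdq]
    simp
  have hgξ : iteratedDeriv n g ξ = c * n.factorial := by
    have h0 : iteratedDeriv n g ξ - iteratedDeriv n P ξ = 0 := by
      rw [← hsplit]; exact hξ0
    rw [sub_eq_zero] at h0
    rw [h0, hPn]
  have hCb := hC ξ hξ
  rw [hgξ, abs_mul, abs_of_pos hfac] at hCb
  have hcabs : |c| ≤ C / n.factorial := by
    rw [le_div_iff₀ hfac]; exact hCb
  have hprodb : |q.eval x| ≤ (2 * T) ^ n := by
    rw [hqeval, Finset.abs_prod]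
    calc ∏ z ∈ s, |x - z| ≤ ∏ _z ∈ s, (2 * T) := by
          apply Finset.prod_le_prod (fun z _ => abs_nonneg _)
          intro z hzs
          obtain ⟨h1, h2⟩ := hsub z hzs
          rw [abs_of_nonneg (by linarith [hx.1] : (0:ℝ) ≤ x - z)]
          linarith [hx.2]
      _ = (2 * T) ^ n := by rw [Finset.prod_const, hcard]
  calc |g x| = |c| * |q.eval x| := by rw [hgxc, abs_mul]
    _ ≤ (C / n.factorial) * (2 * T) ^ n := by
        apply mul_le_mul hcabs hprodb (abs_nonneg _)
        positivity
    _ = C * (2 * T) ^ n / n.factorial := by ring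

theorem stmt_5 (T M : ℝ) (hT : 0 < T) (hM : 0 < M) (n : ℕ) (h2T : 2 * T ≤ n)
    (δ : ℝ) (hδ : δ = (2 * T) ^ n / (Nat.factorial n))
    (f : ℝ → ℝ → ℝ) (hf : ContDiff ℝ (⊤ : ℕ∞) (Function.uncurry f))
    (hd2 : ∀ x ∈ Icc (0:ℝ) n, ∀ y ∈ Icc (0:ℝ) n, |deriv (f x) y| ≤ M / 2)
    (hd1n : ∀ x ∈ Icc (0:ℝ) n, ∀ y ∈ Icc (0:ℝ) n,
      |iteratedDeriv n (fun x' => f x' y) x| ≤ M / 2)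
    (hbig : ∀ r : ℕ, r ≤ ⌊T / δ⌋₊ →
      ∃ x ∈ Icc T (2 * T), |f x (r * δ)| > M * δ) :
    ∀ t ∈ Icc (0:ℝ) T,
      ∀ S : Finset ℝ, (∀ x ∈ S, x ∈ Icc 0 T ∧ f x t = 0) → S.card < n := by
  intro t ht S hS
  by_contra hcon
  push_neg at hcon
  obtain ⟨s, hsS, hscard⟩ := Finset.exists_subset_card_eq hcon
  have hδ0 : 0 < δ := by
    rw [hδ]
    have : (0:ℝ) < n.factorial := by exact_mod_cast n.factorial_pos
    positivity
  have hTn : T ≤ (n:ℝ) := by linarith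
  set r : ℕ := ⌊t / δ⌋₊ with hr
  have hrle : r ≤ ⌊T / δ⌋₊ := Nat.floor_le_floor (by gcongr; exact ht.2)
  obtain ⟨x, hx, hbx⟩ := hbig r hrle
  have hxn : x ∈ Icc (0:ℝ) n := ⟨le_trans hT.le hx.1, le_trans hx.2 h2T⟩
  have htn : t ∈ Icc (0:ℝ) n := ⟨ht.1, le_trans ht.2 hTn⟩
  -- interpolation bound on g := fun x' => f x' t
  have hg : ContDiff ℝ ∞ (fun x' => f x' t) :=
    (hf.of_le (by simp)).comp (contDiff_id.prodMk contDiff_const)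
  have h1 : |f x t| ≤ (M / 2) * (2 * T) ^ n / n.factorial := by
    apply interp_bound n T (M / 2) hT _ hg s hscard
      (fun z hzs => (hS z (hsS hzs)).1) (fun z hzs => (hS z (hsS hzs)).2)
      ?_ x hx
    intro ξ hξ
    exact hd1n ξ ⟨hξ.1, le_trans hξ.2 h2T⟩ t htn
  -- mean value in second variable
  have hrt : (r : ℝ) * δ ≤ t := by
    have h0 := Nat.floor_le (div_nonneg ht.1 hδ0.le)
    rw [← hr] at h0
    calc (r : ℝ) * δ ≤ (t / δ) * δ := by
          apply mul_le_mul_of_nonneg_right h0 hδ0.le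
      _ = t := by field_simp
  have htr : t - (r : ℝ) * δ ≤ δ := by
    have h0 := Nat.lt_floor_add_one (t / δ)
    rw [← hr] at h0
    have h1 : t < ((r : ℝ) + 1) * δ := by
      rw [← div_lt_iff₀ hδ0]; linarith
    nlinarith
  have hrn : (r : ℝ) * δ ∈ Icc (0:ℝ) n := by
    constructor
    · positivity
    · calc (r : ℝ) * δ ≤ t := hrt
        _ ≤ (n : ℝ) := htn.2
  have hfx : ContDiff ℝ ∞ (f x) := (hf.of_le (by simp)).comp (contDiff_const.prodMk contDiff_id)
  have hmvt : |f x t - f x ((r : ℝ) * δ)| ≤ (M / 2) * |t - (r : ℝ) * δ| := by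
    have := Convex.norm_image_sub_le_of_norm_deriv_le
      (f := f x) (C := M / 2) (s := Icc (0:ℝ) n)
      (fun y _ => (hfx.differentiable (by simp)).differentiableAt)
      (fun y hy => by rw [Real.norm_eq_abs]; exact hd2 x hxn y hy)
      (convex_Icc (0:ℝ) (n:ℝ)) hrn htn
    simpa [Real.norm_eq_abs] using this
  have hδeq : (M / 2) * (2 * T) ^ n / n.factorial = (M / 2) * δ := by
    rw [hδ]; ring
  rw [hδeq] at h1
  have habs : |t - (r : ℝ) * δ| ≤ δ := by
    rw [abs_of_nonneg (by linarith)]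
    exact htr
  have h2 : |f x t - f x ((r : ℝ) * δ)| ≤ (M / 2) * δ := by
    calc |f x t - f x ((r : ℝ) * δ)| ≤ (M / 2) * |t - (r : ℝ) * δ| := hmvt
      _ ≤ (M / 2) * δ := by
          apply mul_le_mul_of_nonneg_left habs (by linarith)
  have h3 : |f x ((r : ℝ) * δ)| ≤ M * δ := by
    calc |f x ((r : ℝ) * δ)| ≤ |f x t| + |f x t - f x ((r : ℝ) * δ)| := by
          have he : f x ((r : ℝ) * δ) = f x t - (f x t - f x ((r : ℝ) * δ)) := by ring
          conv_lhs => rw [he]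
          exact abs_sub _ _
      _ ≤ (M / 2) * δ + (M / 2) * δ := add_le_add h1 h2
      _ = M * δ := by ring
  linarith [hbx]
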